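/- arXiv:1608.00722 — 2 statements merged into one kernel-verified Lean document; each statement's English description precedes it below -/
import Mathlib

section
/- (Lemma 3.2, high-power case.) Let P > 2 and define f₂ : ℝ → ℝ by f₂(B) = 1/2 − (1/2)·erf(√B − √P). Set ζ₁ = ((√P − √(P−2))/2)² and ζ₂ = ((√P + √(P−2))/2)², so ζ₁ < ζ₂. Then f₂ is convex on [0, ζ₁] (ConvexOn ℝ (Set.Icc 0 ζ₁) f₂), concave on [ζ₁, ζ₂] (ConcaveOn ℝ (Set.Icc ζ₁ ζ₂) f₂), and convex on [ζ₂, ∞) (ConvexOn ℝ (Set.Ici ζ₂) f₂). -/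
/-!
With `s = √B`, the function `B ↦ 1/2 - erf (√B - c) / 2` has second derivative
`exp (-(s - c)²) (s² - c s + 1/2) / (2 √π s³)` on `B > 0`, so its convexity is governed by the sign
of the quadratic `s² - c s + 1/2`. For `c = √P` this quadratic has the roots
`(√P ∓ √(P - 2)) / 2 = √ζ₁, √ζ₂`, real because `P > 2`.
-/

open MeasureTheory ProbabilityTheory Real Set

noncomputable def erf (x : ℝ) : ℝ :=
  (2 / Real.sqrt Real.pi) * ∫ t in (0:ℝ)..x, Real.exp (-t^2)

theorem hasDerivAt_erf (x : ℝ) : HasDerivAt erf (2 / √π * exp (-x ^ 2)) x := by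
  have hc : Continuous fun t : ℝ => exp (-t ^ 2) := by fun_prop
  exact (intervalIntegral.integral_hasDerivAt_right (hc.intervalIntegrable _ _)
    (hc.stronglyMeasurableAtFilter _ _) hc.continuousAt).const_mul _

theorem continuous_erf : Continuous erf :=
  continuous_iff_continuousAt.2 fun x => (hasDerivAt_erf x).continuousAt

noncomputable def halfErfcSqrt (c B : ℝ) : ℝ := 1 / 2 - 1 / 2 * erf (√B - c)

noncomputable def halfErfcSqrtDeriv (c B : ℝ) : ℝ := -(exp (-(√B - c) ^ 2) / (2 * √π * √B))

theorem continuous_halfErfcSqrt (c : ℝ) : Continuous (halfErfcSqrt c) :=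
  continuous_const.sub <| continuous_const.mul <|
    continuous_erf.comp (continuous_sqrt.sub continuous_const)

theorem hasDerivAt_halfErfcSqrt (c : ℝ) {B : ℝ} (hB : 0 < B) :
    HasDerivAt (halfErfcSqrt c) (halfErfcSqrtDeriv c B) B := by
  have hs : 0 < √B := sqrt_pos.2 hB
  refine ((((hasDerivAt_erf _).comp B ((hasDerivAt_sqrt hB.ne').sub_const c)).const_mul
    (1 / 2 : ℝ)).const_sub (1 / 2 : ℝ)).congr_deriv ?_
  unfold halfErfcSqrtDeriv
  field_simp

theorem hasDerivAt_halfErfcSqrtDeriv (c : ℝ) {B : ℝ} (hB : 0 < B) :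
    HasDerivAt (halfErfcSqrtDeriv c)
      (exp (-(√B - c) ^ 2) * (√B ^ 2 - c * √B + 1 / 2) / (2 * √π * √B ^ 3)) B := by
  have hs : 0 < √B := sqrt_pos.2 hB
  have hπ : 0 < √π := sqrt_pos.2 pi_pos
  have hsqrt := hasDerivAt_sqrt hB.ne'
  refine ((((hsqrt.sub_const c).pow 2).neg.exp.div
    (hsqrt.const_mul (2 * √π)) (by positivity)).neg).congr_deriv ?_
  simp only [Pi.pow_apply, Pi.neg_apply]
  have hB' : B = √B ^ 2 := (sq_sqrt hB.le).symm
  generalize √B = s at hs hB' ⊢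
  subst hB'
  field_simp
  ring

theorem convexOn_halfErfcSqrt {c : ℝ} {D : Set ℝ} (hD : Convex ℝ D)
    (hD₀ : ∀ B ∈ interior D, 0 < B) (hq : ∀ B ∈ interior D, 0 ≤ √B ^ 2 - c * √B + 1 / 2) :
    ConvexOn ℝ D (halfErfcSqrt c) :=
  convexOn_of_hasDerivWithinAt2_nonneg hD (continuous_halfErfcSqrt c).continuousOn
    (fun B hB => (hasDerivAt_halfErfcSqrt c (hD₀ B hB)).hasDerivWithinAt)
    (fun B hB => (hasDerivAt_halfErfcSqrtDeriv c (hD₀ B hB)).hasDerivWithinAt)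
    (fun B hB => div_nonneg (mul_nonneg (exp_pos _).le (hq B hB)) (by positivity))

theorem concaveOn_halfErfcSqrt {c : ℝ} {D : Set ℝ} (hD : Convex ℝ D)
    (hD₀ : ∀ B ∈ interior D, 0 < B) (hq : ∀ B ∈ interior D, √B ^ 2 - c * √B + 1 / 2 ≤ 0) :
    ConcaveOn ℝ D (halfErfcSqrt c) :=
  concaveOn_of_hasDerivWithinAt2_nonpos hD (continuous_halfErfcSqrt c).continuousOn
    (fun B hB => (hasDerivAt_halfErfcSqrt c (hD₀ B hB)).hasDerivWithinAt)
    (fun B hB => (hasDerivAt_halfErfcSqrtDeriv c (hD₀ B hB)).hasDerivWithinAt)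
    (fun B hB => div_nonpos_of_nonpos_of_nonneg
      (mul_nonpos_of_nonneg_of_nonpos (exp_pos _).le (hq B hB)) (by positivity))

section Roots

variable {u₁ u₂ : ℝ}

theorem sq_sub_add_mul_add_half_eq_mul (hprod : u₁ * u₂ = 1 / 2) (s : ℝ) :
    s ^ 2 - (u₁ + u₂) * s + 1 / 2 = (s - u₁) * (s - u₂) := by
  rw [← hprod]; ring

theorem convexOn_halfErfcSqrt_Icc_zero (h₀ : 0 < u₁) (h₁₂ : u₁ < u₂) (hprod : u₁ * u₂ = 1 / 2) :
    ConvexOn ℝ (Icc 0 (u₁ ^ 2)) (halfErfcSqrt (u₁ + u₂)) := by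
  refine convexOn_halfErfcSqrt (convex_Icc _ _) (by simp +contextual) fun B hB => ?_
  rw [interior_Icc] at hB
  have hs : √B < u₁ := (sqrt_lt' h₀).2 hB.2
  rw [sq_sub_add_mul_add_half_eq_mul hprod]
  nlinarith

theorem concaveOn_halfErfcSqrt_Icc (h₀ : 0 < u₁) (hprod : u₁ * u₂ = 1 / 2) :
    ConcaveOn ℝ (Icc (u₁ ^ 2) (u₂ ^ 2)) (halfErfcSqrt (u₁ + u₂)) := by
  have hu₂ : 0 < u₂ := pos_of_mul_pos_right (hprod ▸ one_half_pos) h₀.le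
  refine concaveOn_halfErfcSqrt (convex_Icc _ _)
    (fun B hB => by rw [interior_Icc] at hB; exact (sq_nonneg u₁).trans_lt hB.1) fun B hB => ?_
  rw [interior_Icc] at hB
  have hs₁ : u₁ < √B := lt_sqrt_of_sq_lt hB.1
  have hs₂ : √B < u₂ := (sqrt_lt' hu₂).2 hB.2
  rw [sq_sub_add_mul_add_half_eq_mul hprod]
  nlinarith

theorem convexOn_halfErfcSqrt_Ici (h₁₂ : u₁ < u₂) (hprod : u₁ * u₂ = 1 / 2) :
    ConvexOn ℝ (Ici (u₂ ^ 2)) (halfErfcSqrt (u₁ + u₂)) := by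
  refine convexOn_halfErfcSqrt (convex_Ici _)
    (fun B hB => by rw [interior_Ici] at hB; exact (sq_nonneg u₂).trans_lt hB) fun B hB => ?_
  rw [interior_Ici] at hB
  have hs : u₂ < √B := lt_sqrt_of_sq_lt hB
  rw [sq_sub_add_mul_add_half_eq_mul hprod]
  nlinarith

end Roots

theorem stmt_6 (P : ℝ) (hP : 2 < P)
    (f₂ : ℝ → ℝ) (hf₂ : ∀ B, f₂ B = 1/2 - (1/2) * erf (Real.sqrt B - Real.sqrt P))
    (ζ₁ ζ₂ : ℝ)
    (hζ₁ : ζ₁ = ((Real.sqrt P - Real.sqrt (P - 2)) / 2)^2)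
    (hζ₂ : ζ₂ = ((Real.sqrt P + Real.sqrt (P - 2)) / 2)^2) :
    ζ₁ < ζ₂ ∧
    ConvexOn ℝ (Set.Icc 0 ζ₁) f₂ ∧
    ConcaveOn ℝ (Set.Icc ζ₁ ζ₂) f₂ ∧
    ConvexOn ℝ (Set.Ici ζ₂) f₂ := by
  set u₁ := (√P - √(P - 2)) / 2 with hu₁
  set u₂ := (√P + √(P - 2)) / 2 with hu₂
  have hd₀ : 0 < √(P - 2) := sqrt_pos.2 (by linarith)
  have hdc : √(P - 2) < √P := sqrt_lt_sqrt (by linarith) (by linarith)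
  have h₀ : 0 < u₁ := by linarith
  have h₁₂ : u₁ < u₂ := by linarith
  have hsum : u₁ + u₂ = √P := by linarith
  have hprod : u₁ * u₂ = 1 / 2 := by
    linear_combination (sq_sqrt (by linarith : 0 ≤ P) - sq_sqrt (by linarith : 0 ≤ P - 2)) / 4
  obtain rfl : f₂ = halfErfcSqrt (u₁ + u₂) := funext fun B => by
    rw [hf₂, halfErfcSqrt, hsum]
  subst hζ₁ hζ₂
  exact ⟨pow_lt_pow_left₀ h₁₂ h₀.le two_ne_zero, convexOn_halfErfcSqrt_Icc_zero h₀ h₁₂ hprod,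
    concaveOn_halfErfcSqrt_Icc h₀ hprod, convexOn_halfErfcSqrt_Ici h₁₂ hprod⟩
end

section
/- (Concavity lemma used in the proof of Proposition 4.1.) Let P ≥ 0. The function z ↦ Real.log (1/2 + (1/2)·erf(√z + √(P/2))) is concave on [0, ∞) (ConcaveOn ℝ (Set.Ici 0) of this function). -/
/-! Write `Φ = 1/2 + erf/2`, so that `Φ' = φ` with `φ x = exp (-x²) / √π` and `φ' = -2xφ`. Then
`(log Φ)'' = (-2xφΦ - φ²) / Φ²`, which is nonpositive because `-2xΦ(x) ≤ φ(x)`: for `x < 0`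
bound `-2x ≤ -2t` under `Φ(x) = ∫_{-∞}^x e^{-t²} / √π` and integrate `-2t e^{-t²}` exactly.
So `log Φ` is concave and increasing on `ℝ`, and composing it with the concave function
`z ↦ √z + √(P/2)` keeps it concave. -/

open MeasureTheory ProbabilityTheory Real Set

open Filter Topology

theorem ConcaveOn.comp_of_monotone {𝕜 E β γ : Type*} [Semiring 𝕜] [PartialOrder 𝕜]
    [AddCommMonoid E] [AddCommMonoid β] [PartialOrder β] [AddCommMonoid γ] [PartialOrder γ]
    [SMul 𝕜 E] [SMul 𝕜 β] [SMul 𝕜 γ] {s : Set E} {f : E → β} {g : β → γ}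
    (hg : ConcaveOn 𝕜 univ g) (hg' : Monotone g) (hf : ConcaveOn 𝕜 s f) :
    ConcaveOn 𝕜 s (g ∘ f) :=
  ⟨hf.1, fun _ hx _ hy _ _ ha hb hab =>
    (hg.2 (mem_univ _) (mem_univ _) ha hb hab).trans (hg' (hf.2 hx hy ha hb hab))⟩

lemma integrable_exp_neg_sq : Integrable fun t : ℝ => exp (-t ^ 2) := by
  simpa using integrable_exp_neg_mul_sq one_pos

lemma integrable_mul_exp_neg_sq : Integrable fun t : ℝ => -2 * t * exp (-t ^ 2) := by
  simpa [mul_assoc] using (integrable_mul_exp_neg_mul_sq one_pos).const_mul (-2)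

lemma hasDerivAt_exp_neg_sq (x : ℝ) :
    HasDerivAt (fun t : ℝ => exp (-t ^ 2)) (-2 * x * exp (-x ^ 2)) x := by
  convert ((hasDerivAt_pow 2 x).fun_neg).exp using 1
  ring

lemma tendsto_exp_neg_sq_atBot : Tendsto (fun t : ℝ => exp (-t ^ 2)) atBot (𝓝 0) := by
  refine tendsto_exp_atBot.comp (tendsto_neg_atTop_atBot.comp ?_)
  simpa only [Function.comp_def, sq_abs] using
    (tendsto_pow_atTop (α := ℝ) two_ne_zero).comp tendsto_abs_atBot_atTop

lemma integral_Iic_zero_exp_neg_sq : ∫ t in Iic (0 : ℝ), exp (-t ^ 2) = √π / 2 := by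
  have h := integral_comp_neg_Iic 0 fun t : ℝ => exp (-t ^ 2)
  simp only [neg_sq, neg_zero] at h
  simpa [h] using integral_gaussian_Ioi 1

lemma integral_Iic_mul_exp_neg_sq (x : ℝ) :
    ∫ t in Iic x, -2 * t * exp (-t ^ 2) = exp (-x ^ 2) := by
  rw [integral_Iic_of_hasDerivAt_of_tendsto' (fun t _ => hasDerivAt_exp_neg_sq t)
    integrable_mul_exp_neg_sq.integrableOn tendsto_exp_neg_sq_atBot, sub_zero]

noncomputable def erfCDF (x : ℝ) : ℝ := 1 / 2 + 1 / 2 * erf x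

noncomputable def gaussDensity (x : ℝ) : ℝ := (√π)⁻¹ * exp (-x ^ 2)

lemma gaussDensity_pos (x : ℝ) : 0 < gaussDensity x := by
  unfold gaussDensity
  have := pi_pos
  positivity

lemma erfCDF_eq_integral_Iic (x : ℝ) : erfCDF x = (√π)⁻¹ * ∫ t in Iic x, exp (-t ^ 2) := by
  have hsplit := intervalIntegral.integral_Iic_sub_Iic
    integrable_exp_neg_sq.integrableOn integrable_exp_neg_sq.integrableOn (a := 0) (b := x)
  have hπ : √π ≠ 0 := (sqrt_pos.2 pi_pos).ne'
  rw [erfCDF, erf, ← hsplit, integral_Iic_zero_exp_neg_sq]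
  field_simp
  ring

lemma erfCDF_pos (x : ℝ) : 0 < erfCDF x := by
  rw [erfCDF_eq_integral_Iic]
  refine mul_pos (inv_pos.2 (sqrt_pos.2 pi_pos)) ?_
  rw [setIntegral_pos_iff_support_of_nonneg_ae (.of_forall fun t => (exp_pos _).le)
    integrable_exp_neg_sq.integrableOn]
  simp [Function.support, (exp_pos _).ne']

lemma hasDerivAt_erfCDF (x : ℝ) : HasDerivAt erfCDF (gaussDensity x) x := by
  have hI : HasDerivAt (fun y => ∫ t in (0 : ℝ)..y, exp (-t ^ 2)) (exp (-x ^ 2)) x :=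
    ((by fun_prop : Continuous fun t : ℝ => exp (-t ^ 2)).integral_hasStrictDerivAt 0 x).hasDerivAt
  exact (((hI.const_mul (2 / √π)).const_mul (1 / 2)).const_add (1 / 2)).congr_deriv
    (by unfold gaussDensity; ring)

lemma hasDerivAt_gaussDensity (x : ℝ) :
    HasDerivAt gaussDensity (-2 * x * gaussDensity x) x :=
  ((hasDerivAt_exp_neg_sq x).const_mul (√π)⁻¹).congr_deriv (by unfold gaussDensity; ring)

lemma neg_two_mul_mul_erfCDF_le (x : ℝ) : -2 * x * erfCDF x ≤ gaussDensity x := by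
  rcases le_or_gt 0 x with hx | hx
  · nlinarith [erfCDF_pos x, gaussDensity_pos x]
  have hmono : ∫ t in Iic x, -2 * x * exp (-t ^ 2) ≤ ∫ t in Iic x, -2 * t * exp (-t ^ 2) := by
    refine setIntegral_mono_on (integrable_exp_neg_sq.const_mul _).integrableOn
      integrable_mul_exp_neg_sq.integrableOn measurableSet_Iic fun t (ht : t ≤ x) => ?_
    exact mul_le_mul_of_nonneg_right (by linarith) (exp_pos _).le
  rw [integral_const_mul, integral_Iic_mul_exp_neg_sq] at hmono
  rw [erfCDF_eq_integral_Iic, gaussDensity, mul_left_comm]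
  gcongr

lemma hasDerivAt_log_erfCDF (x : ℝ) :
    HasDerivAt (fun y => log (erfCDF y)) (gaussDensity x / erfCDF x) x :=
  (hasDerivAt_erfCDF x).log (erfCDF_pos x).ne'

lemma concaveOn_log_erfCDF : ConcaveOn ℝ univ fun x => log (erfCDF x) := by
  refine concaveOn_of_hasDerivWithinAt2_nonpos convex_univ
    (f' := fun x => gaussDensity x / erfCDF x)
    (f'' := fun x => (-2 * x * gaussDensity x * erfCDF x - gaussDensity x * gaussDensity x)
      / erfCDF x ^ 2)
    (fun x _ => (hasDerivAt_log_erfCDF x).continuousAt.continuousWithinAt)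
    (fun x _ => (hasDerivAt_log_erfCDF x).hasDerivWithinAt)
    (fun x _ => ((hasDerivAt_gaussDensity x).div (hasDerivAt_erfCDF x)
      (erfCDF_pos x).ne').hasDerivWithinAt)
    fun x _ => div_nonpos_of_nonpos_of_nonneg ?_ (sq_nonneg _)
  nlinarith [mul_le_mul_of_nonneg_right (neg_two_mul_mul_erfCDF_le x) (gaussDensity_pos x).le]

lemma strictMono_log_erfCDF : StrictMono fun x => log (erfCDF x) :=
  strictMono_of_hasDerivAt_pos hasDerivAt_log_erfCDF
    fun x => div_pos (gaussDensity_pos x) (erfCDF_pos x)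

theorem stmt_11_general (P : ℝ) :
    ConcaveOn ℝ (Set.Ici 0)
      (fun z : ℝ => Real.log (1/2 + (1/2) * erf (Real.sqrt z + Real.sqrt (P/2)))) := by
  have hshift : ConcaveOn ℝ (Ici 0) fun z : ℝ => √z + √(P / 2) :=
    strictConcaveOn_sqrt.concaveOn.add_const _
  exact concaveOn_log_erfCDF.comp_of_monotone strictMono_log_erfCDF.monotone hshift

theorem stmt_11 (P : ℝ) (hP : 0 ≤ P) :
    ConcaveOn ℝ (Set.Ici 0)
      (fun z : ℝ => Real.log (1/2 + (1/2) * erf (Real.sqrt z + Real.sqrt (P/2)))) :=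
  stmt_11_general P
end
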